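/- arXiv:2301.12671 — 4 statements merged into one kernel-verified Lean document; each statement's English description precedes it below -/
import Mathlib

section
/- Let S be a set of clusterings of X into Fin k, each of which co-clusters at least one pair. If Θ* ∈ S satisfies λ⁻(Θ*) ≤ λ⁻(Θ) for every Θ ∈ S, then MD(Θ*) ≤ MD(Θ) + ε for every Θ ∈ S. (Proposition 2, part 1: a clustering minimizing λ⁻ is ε-optimal with respect to the maximum-diameter objective.) -/
variable {α : Type*}

/-- A pair is an ordered pair of distinct points of `X`. -/
def IsPair (X : Finset α) (p : α × α) : Prop :=
  p.1 ∈ X ∧ p.2 ∈ X ∧ p.1 ≠ p.2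

/-- The pairs of distinct points of `X` co-clustered by `Θ`. -/
def coPairs [DecidableEq α] {k : ℕ} (X : Finset α) (Θ : α → Fin k) : Finset (α × α) :=
  (X ×ˢ X).filter fun p => p.1 ≠ p.2 ∧ Θ p.1 = Θ p.2

/-- The pairs of distinct points of `X` separated by `Θ`. -/
def sepPairs [DecidableEq α] {k : ℕ} (X : Finset α) (Θ : α → Fin k) : Finset (α × α) :=
  (X ×ˢ X).filter fun p => p.1 ≠ p.2 ∧ Θ p.1 ≠ Θ p.2

/-- Maximum diameter: maximum distance over co-clustered pairs. -/
noncomputable def MD [MetricSpace α] [DecidableEq α] {k : ℕ} (X : Finset α) (Θ : α → Fin k)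
    (h : (coPairs X Θ).Nonempty) : ℝ :=
  (coPairs X Θ).sup' h fun p => dist p.1 p.2

/-- Minimum split: minimum distance over separated pairs. -/
noncomputable def MS [MetricSpace α] [DecidableEq α] {k : ℕ} (X : Finset α) (Θ : α → Fin k)
    (h : (sepPairs X Θ).Nonempty) : ℝ :=
  (sepPairs X Θ).inf' h fun p => dist p.1 p.2

/-- `λ⁻(Θ)`: the distance class of a co-clustered pair of maximal distance
(equivalently, under monotonicity of `w`, the largest class of a co-clustered pair). -/
def lamMinus [DecidableEq α] {k : ℕ} (X : Finset α) (w : α × α → ℕ) (Θ : α → Fin k)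
    (h : (coPairs X Θ).Nonempty) : ℕ :=
  (coPairs X Θ).sup' h w

/-- `λ⁺(Θ)`: the distance class of a separated pair of minimal distance
(equivalently, under monotonicity of `w`, the smallest class of a separated pair). -/
def lamPlus [DecidableEq α] {k : ℕ} (X : Finset α) (w : α × α → ℕ) (Θ : α → Fin k)
    (h : (sepPairs X Θ).Nonempty) : ℕ :=
  (sepPairs X Θ).inf' h w

lemma coPairs_isPair [DecidableEq α] {k : ℕ} {X : Finset α} {Θ : α → Fin k} {p : α × α}
    (hp : p ∈ coPairs X Θ) : IsPair X p := by
  simp only [coPairs, Finset.mem_filter, Finset.mem_product] at hp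
  exact ⟨hp.1.1, hp.1.2, hp.2.1⟩

/-- A clustering minimizing `λ⁻` over a set `S` of clusterings is `ε`-optimal
with respect to the maximum-diameter objective. -/
theorem md_eps_optimal_of_lamMinus_min [MetricSpace α] [DecidableEq α]
    (X : Finset α) (hX : X.Nonempty) (ε : ℝ) (hε : 0 ≤ ε) (w : α × α → ℕ)
    (hmono : ∀ p q : α × α, IsPair X p → IsPair X q →
      dist p.1 p.2 ≤ dist q.1 q.2 → w p ≤ w q)
    (hspread : ∀ p q : α × α, IsPair X p → IsPair X q →
      w p = w q → dist q.1 q.2 ≤ dist p.1 p.2 + ε)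
    {k : ℕ} (hk : 1 ≤ k)
    (S : Set (α → Fin k))
    (hSco : ∀ Θ ∈ S, (coPairs X Θ).Nonempty)
    (Θstar : α → Fin k) (hstar : Θstar ∈ S)
    (hmin : ∀ Θ, ∀ hΘ : Θ ∈ S,
      lamMinus X w Θstar (hSco Θstar hstar) ≤ lamMinus X w Θ (hSco Θ hΘ)) :
    ∀ Θ, ∀ hΘ : Θ ∈ S,
      MD X Θstar (hSco Θstar hstar) ≤ MD X Θ (hSco Θ hΘ) + ε := by
  intro Θ hΘ
  obtain ⟨pstar, hpstar, hMDstar⟩ := Finset.exists_mem_eq_sup' (hSco Θstar hstar)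
    (fun p => dist p.1 p.2)
  obtain ⟨q, hq, hlamq⟩ := Finset.exists_mem_eq_sup' (hSco Θ hΘ) w
  have hMDstar' : MD X Θstar (hSco Θstar hstar) = dist pstar.1 pstar.2 := hMDstar
  have hwps : w pstar ≤ w q := by
    calc w pstar ≤ lamMinus X w Θstar (hSco Θstar hstar) :=
          Finset.le_sup' w hpstar
      _ ≤ lamMinus X w Θ (hSco Θ hΘ) := hmin Θ hΘ
      _ = w q := hlamq
  have hdq : dist q.1 q.2 ≤ MD X Θ (hSco Θ hΘ) :=
    Finset.le_sup' (fun p => dist p.1 p.2) hq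
  rw [hMDstar']
  rcases eq_or_lt_of_le hwps with heq | hlt
  · have := hspread q pstar (coPairs_isPair hq) (coPairs_isPair hpstar) heq.symm
    linarith
  · have : dist pstar.1 pstar.2 ≤ dist q.1 q.2 := by
      by_contra h
      exact absurd (hmono q pstar (coPairs_isPair hq) (coPairs_isPair hpstar)
        (le_of_not_ge h)) (not_le.2 hlt)
    linarith
end

section
/- Let S be a nonempty finite set of clusterings of X into Fin k, each of which co-clusters at least one pair and separates at least one pair. Suppose Θ* ∈ S is Pareto optimal with respect to minimizing λ⁻ and maximizing λ⁺, i.e., there is no Θ ∈ S with λ⁻(Θ) ≤ λ⁻(Θ*) and λ⁺(Θ) ≥ λ⁺(Θ*) such that at least one of the two inequalities is strict. Then there exists Θ^P ∈ S that is Pareto optimal with respect to minimizing MD and maximizing MS (i.e., there is no Θ ∈ S with MD(Θ) ≤ MD(Θ^P) and MS(Θ) ≥ MS(Θ^P) such that at least one of the two inequalities is strict) and that satisfies MD(Θ*) ≤ MD(Θ^P) + ε and MS(Θ*) ≥ MS(Θ^P) − ε. (Proposition 2, part 2: a λ-Pareto optimal clustering is ε-Pareto optimal for the bi-criteria MD–MS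 objective.) -/
variable {α : Type*}

/-! Among the clusterings of `S` whose `(MD, MS)` weakly dominates that of `Θ*`, pick one, `Θᴾ`,
that is Pareto optimal; it is then Pareto optimal in all of `S`. Since `w` is monotone, `Θᴾ` also
weakly dominates `Θ*` in `(λ⁻, λ⁺)`, so optimality of `Θ*` forces `λ⁻` and `λ⁺` to agree on the two
clusterings. The extremal pairs realising `MD` and `MS` then lie in a common distance class, and
`ε`-spread bounds the loss. -/

section PairsOfClustering

variable [DecidableEq α] {X : Finset α} {k : ℕ} {Θ : α → Fin k} {p : α × α}

theorem IsPair.of_mem_coPairs (h : p ∈ coPairs X Θ) : IsPair X p := by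
  simp only [coPairs, Finset.mem_filter, Finset.mem_product] at h
  exact ⟨h.1.1, h.1.2, h.2.1⟩

theorem IsPair.of_mem_sepPairs (h : p ∈ sepPairs X Θ) : IsPair X p := by
  simp only [sepPairs, Finset.mem_filter, Finset.mem_product] at h
  exact ⟨h.1.1, h.1.2, h.2.1⟩

end PairsOfClustering

section ClassAssignment

variable [MetricSpace α]

def ClassMonotone (X : Finset α) (w : α × α → ℕ) : Prop :=
  ∀ p q : α × α, IsPair X p → IsPair X q → dist p.1 p.2 ≤ dist q.1 q.2 → w p ≤ w q

def ClassSpread (X : Finset α) (w : α × α → ℕ) (ε : ℝ) : Prop :=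
  ∀ p q : α × α, IsPair X p → IsPair X q → w p = w q → dist q.1 q.2 ≤ dist p.1 p.2 + ε

variable {X : Finset α} {w : α × α → ℕ}

theorem dist_le_add_of_class_le {ε : ℝ} (hspread : ClassSpread X w ε) (hε : 0 ≤ ε)
    (hmono : ClassMonotone X w) {p q : α × α} (hp : IsPair X p) (hq : IsPair X q)
    (hpq : w p ≤ w q) : dist p.1 p.2 ≤ dist q.1 q.2 + ε := by
  rcases hpq.eq_or_lt with heq | hlt
  · exact hspread q p hq hp heq.symm
  · have : dist p.1 p.2 < dist q.1 q.2 := lt_of_not_ge fun h => hlt.not_ge (hmono q p hq hp h)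
    linarith

variable [DecidableEq α] {k : ℕ} {Θ Θ' : α → Fin k}

theorem exists_MD_eq_lamMinus_eq (hmono : ClassMonotone X w)
    (h : (coPairs X Θ).Nonempty) :
    ∃ p ∈ coPairs X Θ, MD X Θ h = dist p.1 p.2 ∧ lamMinus X w Θ h = w p := by
  obtain ⟨p, hp, hMD⟩ := Finset.exists_mem_eq_sup' h fun p : α × α => dist p.1 p.2
  refine ⟨p, hp, hMD, le_antisymm (Finset.sup'_le _ _ fun q hq => ?_) (Finset.le_sup' w hp)⟩
  refine hmono q p (.of_mem_coPairs hq) (.of_mem_coPairs hp) ?_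
  exact hMD ▸ Finset.le_sup' (fun p : α × α => dist p.1 p.2) hq

theorem exists_MS_eq_lamPlus_eq (hmono : ClassMonotone X w)
    (h : (sepPairs X Θ).Nonempty) :
    ∃ p ∈ sepPairs X Θ, MS X Θ h = dist p.1 p.2 ∧ lamPlus X w Θ h = w p := by
  obtain ⟨p, hp, hMS⟩ := Finset.exists_mem_eq_inf' h fun p : α × α => dist p.1 p.2
  refine ⟨p, hp, hMS, le_antisymm (Finset.inf'_le w hp) (Finset.le_inf' _ _ fun q hq => ?_)⟩
  refine hmono p q (.of_mem_sepPairs hp) (.of_mem_sepPairs hq) ?_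
  exact hMS ▸ Finset.inf'_le (fun p : α × α => dist p.1 p.2) hq

theorem lamMinus_le_of_MD_le (hmono : ClassMonotone X w)
    (h : (coPairs X Θ).Nonempty) (h' : (coPairs X Θ').Nonempty) (hMD : MD X Θ h ≤ MD X Θ' h') :
    lamMinus X w Θ h ≤ lamMinus X w Θ' h' := by
  obtain ⟨p, hp, hpMD, hpw⟩ := exists_MD_eq_lamMinus_eq hmono h
  obtain ⟨p', hp', hp'MD, hp'w⟩ := exists_MD_eq_lamMinus_eq hmono h'
  rw [hpw, hp'w]
  exact hmono p p' (.of_mem_coPairs hp) (.of_mem_coPairs hp') (hpMD ▸ hp'MD ▸ hMD)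

theorem lamPlus_le_of_MS_le (hmono : ClassMonotone X w)
    (h : (sepPairs X Θ).Nonempty) (h' : (sepPairs X Θ').Nonempty) (hMS : MS X Θ h ≤ MS X Θ' h') :
    lamPlus X w Θ h ≤ lamPlus X w Θ' h' := by
  obtain ⟨p, hp, hpMS, hpw⟩ := exists_MS_eq_lamPlus_eq hmono h
  obtain ⟨p', hp', hp'MS, hp'w⟩ := exists_MS_eq_lamPlus_eq hmono h'
  rw [hpw, hp'w]
  exact hmono p p' (.of_mem_sepPairs hp) (.of_mem_sepPairs hp') (hpMS ▸ hp'MS ▸ hMS)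

theorem MD_le_add_of_lamMinus_le {ε : ℝ} (hspread : ClassSpread X w ε) (hε : 0 ≤ ε)
    (hmono : ClassMonotone X w) (h : (coPairs X Θ).Nonempty) (h' : (coPairs X Θ').Nonempty)
    (hlam : lamMinus X w Θ h ≤ lamMinus X w Θ' h') : MD X Θ h ≤ MD X Θ' h' + ε := by
  obtain ⟨p, hp, hpMD, hpw⟩ := exists_MD_eq_lamMinus_eq hmono h
  obtain ⟨p', hp', hp'MD, hp'w⟩ := exists_MD_eq_lamMinus_eq hmono h'
  rw [hpMD, hp'MD]
  exact dist_le_add_of_class_le hspread hε hmono (.of_mem_coPairs hp) (.of_mem_coPairs hp')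
    (hpw ▸ hp'w ▸ hlam)

theorem MS_le_add_of_lamPlus_le {ε : ℝ} (hspread : ClassSpread X w ε) (hε : 0 ≤ ε)
    (hmono : ClassMonotone X w) (h : (sepPairs X Θ).Nonempty) (h' : (sepPairs X Θ').Nonempty)
    (hlam : lamPlus X w Θ h ≤ lamPlus X w Θ' h') : MS X Θ h ≤ MS X Θ' h' + ε := by
  obtain ⟨p, hp, hpMS, hpw⟩ := exists_MS_eq_lamPlus_eq hmono h
  obtain ⟨p', hp', hp'MS, hp'w⟩ := exists_MS_eq_lamPlus_eq hmono h'
  rw [hpMS, hp'MS]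
  exact dist_le_add_of_class_le hspread hε hmono (.of_mem_sepPairs hp) (.of_mem_sepPairs hp')
    (hpw ▸ hp'w ▸ hlam)

end ClassAssignment

-- Pareto dominance is the product order on `β × γᵒᵈ`.
theorem exists_pareto_optimal_le {ι β γ : Type*} [Finite ι] [Preorder β] [Preorder γ]
    (f : ι → β) (g : ι → γ) (i : ι) :
    ∃ j, f j ≤ f i ∧ g i ≤ g j ∧
      ¬ ∃ l, f l ≤ f j ∧ g j ≤ g l ∧ (f l < f j ∨ g j < g l) := by
  obtain ⟨j, ⟨hfj, hgj⟩, hmin⟩ := (Set.toFinite {l | f l ≤ f i ∧ g i ≤ g l}).exists_minimalFor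
    (fun l => (f l, OrderDual.toDual (g l))) _ ⟨i, le_rfl, le_rfl⟩
  refine ⟨j, hfj, hgj, fun ⟨l, hfl, hgl, hlt⟩ => ?_⟩
  obtain ⟨hfl', hgl'⟩ := hmin (j := l) ⟨hfl.trans hfj, hgj.trans hgl⟩ ⟨hfl, hgl⟩
  exact hlt.elim (fun h => h.not_ge hfl') (fun h => h.not_ge hgl')

theorem lam_pareto_implies_eps_pareto_general [MetricSpace α] [DecidableEq α]
    (X : Finset α) (ε : ℝ) (hε : 0 ≤ ε) (w : α × α → ℕ)
    (hmono : ∀ p q : α × α, IsPair X p → IsPair X q →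
      dist p.1 p.2 ≤ dist q.1 q.2 → w p ≤ w q)
    (hspread : ∀ p q : α × α, IsPair X p → IsPair X q →
      w p = w q → dist q.1 q.2 ≤ dist p.1 p.2 + ε)
    {k : ℕ}
    (S : Set (α → Fin k)) (hfin : S.Finite)
    (hSco : ∀ Θ ∈ S, (coPairs X Θ).Nonempty)
    (hSsep : ∀ Θ ∈ S, (sepPairs X Θ).Nonempty)
    (Θstar : α → Fin k) (hstar : Θstar ∈ S)
    (hpareto : ¬ ∃ Θ, ∃ hΘ : Θ ∈ S,
      lamMinus X w Θ (hSco Θ hΘ) ≤ lamMinus X w Θstar (hSco Θstar hstar) ∧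
      lamPlus X w Θstar (hSsep Θstar hstar) ≤ lamPlus X w Θ (hSsep Θ hΘ) ∧
      (lamMinus X w Θ (hSco Θ hΘ) < lamMinus X w Θstar (hSco Θstar hstar) ∨
        lamPlus X w Θstar (hSsep Θstar hstar) < lamPlus X w Θ (hSsep Θ hΘ))) :
    ∃ ΘP, ∃ hP : ΘP ∈ S,
      (¬ ∃ Θ, ∃ hΘ : Θ ∈ S,
        MD X Θ (hSco Θ hΘ) ≤ MD X ΘP (hSco ΘP hP) ∧
        MS X ΘP (hSsep ΘP hP) ≤ MS X Θ (hSsep Θ hΘ) ∧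
        (MD X Θ (hSco Θ hΘ) < MD X ΘP (hSco ΘP hP) ∨
          MS X ΘP (hSsep ΘP hP) < MS X Θ (hSsep Θ hΘ))) ∧
      MD X Θstar (hSco Θstar hstar) ≤ MD X ΘP (hSco ΘP hP) + ε ∧
      MS X ΘP (hSsep ΘP hP) - ε ≤ MS X Θstar (hSsep Θstar hstar) := by
  have : Finite S := hfin.to_subtype
  obtain ⟨ΘP, hMD, hMS, hopt⟩ := exists_pareto_optimal_le
    (fun Θ : S => MD X Θ.1 (hSco Θ.1 Θ.2)) (fun Θ : S => MS X Θ.1 (hSsep Θ.1 Θ.2)) ⟨Θstar, hstar⟩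
  have hlamMinus := lamMinus_le_of_MD_le hmono (hSco ΘP ΘP.2) (hSco Θstar hstar) hMD
  have hlamPlus := lamPlus_le_of_MS_le hmono (hSsep Θstar hstar) (hSsep ΘP ΘP.2) hMS
  obtain ⟨hlamMinus_ge, hlamPlus_le⟩ :=
    not_or.mp fun hlt => hpareto ⟨ΘP, ΘP.2, hlamMinus, hlamPlus, hlt⟩
  refine ⟨ΘP, ΘP.2, fun ⟨Θ, hΘ, hdom⟩ => hopt ⟨⟨Θ, hΘ⟩, hdom⟩, ?_, ?_⟩
  · exact MD_le_add_of_lamMinus_le hspread hε hmono _ _ (not_lt.mp hlamMinus_ge)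
  · have := MS_le_add_of_lamPlus_le hspread hε hmono (hSsep ΘP ΘP.2) (hSsep Θstar hstar)
      (not_lt.mp hlamPlus_le)
    linarith

/-- A clustering that is Pareto optimal w.r.t. minimizing `λ⁻` and maximizing
`λ⁺` is `ε`-Pareto optimal for the bi-criteria MD–MS objective: some MD–MS
Pareto optimal clustering is within `ε` of it in both objectives. -/
theorem lam_pareto_implies_eps_pareto [MetricSpace α] [DecidableEq α]
    (X : Finset α) (hX : X.Nonempty) (ε : ℝ) (hε : 0 ≤ ε) (w : α × α → ℕ)
    (hmono : ∀ p q : α × α, IsPair X p → IsPair X q →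
      dist p.1 p.2 ≤ dist q.1 q.2 → w p ≤ w q)
    (hspread : ∀ p q : α × α, IsPair X p → IsPair X q →
      w p = w q → dist q.1 q.2 ≤ dist p.1 p.2 + ε)
    {k : ℕ} (hk : 1 ≤ k)
    (S : Set (α → Fin k)) (hfin : S.Finite) (hne : S.Nonempty)
    (hSco : ∀ Θ ∈ S, (coPairs X Θ).Nonempty)
    (hSsep : ∀ Θ ∈ S, (sepPairs X Θ).Nonempty)
    (Θstar : α → Fin k) (hstar : Θstar ∈ S)
    (hpareto : ¬ ∃ Θ, ∃ hΘ : Θ ∈ S,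
      lamMinus X w Θ (hSco Θ hΘ) ≤ lamMinus X w Θstar (hSco Θstar hstar) ∧
      lamPlus X w Θstar (hSsep Θstar hstar) ≤ lamPlus X w Θ (hSsep Θ hΘ) ∧
      (lamMinus X w Θ (hSco Θ hΘ) < lamMinus X w Θstar (hSco Θstar hstar) ∨
        lamPlus X w Θstar (hSsep Θstar hstar) < lamPlus X w Θ (hSsep Θ hΘ))) :
    ∃ ΘP, ∃ hP : ΘP ∈ S,
      (¬ ∃ Θ, ∃ hΘ : Θ ∈ S,
        MD X Θ (hSco Θ hΘ) ≤ MD X ΘP (hSco ΘP hP) ∧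
        MS X ΘP (hSsep ΘP hP) ≤ MS X Θ (hSsep Θ hΘ) ∧
        (MD X Θ (hSco Θ hΘ) < MD X ΘP (hSco ΘP hP) ∨
          MS X ΘP (hSsep ΘP hP) < MS X Θ (hSsep Θ hΘ))) ∧
      MD X Θstar (hSco Θstar hstar) ≤ MD X ΘP (hSco ΘP hP) + ε ∧
      MS X ΘP (hSsep ΘP hP) - ε ≤ MS X Θstar (hSsep Θstar hstar) :=
  lam_pareto_implies_eps_pareto_general X ε hε w hmono hspread S hfin hSco hSsep Θstar hstar hpareto
end

section
/- Let S be a set of clusterings of X into Fin k, each of which co-clusters at least one pair and separates at least one pair, and suppose Θ* ∈ S is Pareto optimal with respect to minimizing λ⁻ and maximizing λ⁺ (there is no Θ ∈ S with λ⁻(Θ) ≤ λ⁻(Θ*) and λ⁺(Θ) ≥ λ⁺(Θ*) with at least one inequality strict). Then there is no Θ ∈ S with MD(Θ) < MD(Θ*) − ε and MS(Θ) ≥ MS(Θ*). -/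
variable {α : Type*}

lemma sepPairs_isPair [DecidableEq α] {k : ℕ} {X : Finset α} {Θ : α → Fin k} {p : α × α}
    (hp : p ∈ sepPairs X Θ) : IsPair X p := by
  simp only [sepPairs, Finset.mem_filter, Finset.mem_product] at hp
  exact ⟨hp.1.1, hp.1.2, hp.2.1⟩

/-- For a `λ`-Pareto optimal clustering `Θ*`, no clustering in `S` improves
`MD` by more than `ε` without worsening `MS`. -/
theorem no_md_improvement [MetricSpace α] [DecidableEq α]
    (X : Finset α) (hX : X.Nonempty) (ε : ℝ) (hε : 0 ≤ ε) (w : α × α → ℕ)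
    (hmono : ∀ p q : α × α, IsPair X p → IsPair X q →
      dist p.1 p.2 ≤ dist q.1 q.2 → w p ≤ w q)
    (hspread : ∀ p q : α × α, IsPair X p → IsPair X q →
      w p = w q → dist q.1 q.2 ≤ dist p.1 p.2 + ε)
    {k : ℕ} (hk : 1 ≤ k)
    (S : Set (α → Fin k))
    (hSco : ∀ Θ ∈ S, (coPairs X Θ).Nonempty)
    (hSsep : ∀ Θ ∈ S, (sepPairs X Θ).Nonempty)
    (Θstar : α → Fin k) (hstar : Θstar ∈ S)
    (hpareto : ¬ ∃ Θ, ∃ hΘ : Θ ∈ S,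
      lamMinus X w Θ (hSco Θ hΘ) ≤ lamMinus X w Θstar (hSco Θstar hstar) ∧
      lamPlus X w Θstar (hSsep Θstar hstar) ≤ lamPlus X w Θ (hSsep Θ hΘ) ∧
      (lamMinus X w Θ (hSco Θ hΘ) < lamMinus X w Θstar (hSco Θstar hstar) ∨
        lamPlus X w Θstar (hSsep Θstar hstar) < lamPlus X w Θ (hSsep Θ hΘ))) :
    ¬ ∃ Θ, ∃ hΘ : Θ ∈ S,
      MD X Θ (hSco Θ hΘ) < MD X Θstar (hSco Θstar hstar) - ε ∧
      MS X Θstar (hSsep Θstar hstar) ≤ MS X Θ (hSsep Θ hΘ) := by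
  rintro ⟨Θ, hΘ, hMD, hMS⟩
  obtain ⟨pstar, hpstar, hpeq⟩ := Finset.exists_mem_eq_sup' (hSco Θstar hstar)
    (fun p : α × α => dist p.1 p.2)
  obtain ⟨qstar, hqstar, hqeq⟩ := Finset.exists_mem_eq_inf' (hSsep Θstar hstar)
    (fun p : α × α => dist p.1 p.2)
  -- lamMinus Θ < lamMinus Θstar
  have hlm : lamMinus X w Θ (hSco Θ hΘ) < lamMinus X w Θstar (hSco Θstar hstar) := by
    have hub : ∀ q ∈ coPairs X Θ, w q < w pstar := by
      intro q hq
      have hdq : dist q.1 q.2 ≤ MD X Θ (hSco Θ hΘ) :=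
        Finset.le_sup' (fun p : α × α => dist p.1 p.2) hq
      have hdist : dist q.1 q.2 < dist pstar.1 pstar.2 - ε := by
        calc dist q.1 q.2 ≤ MD X Θ (hSco Θ hΘ) := hdq
          _ < MD X Θstar (hSco Θstar hstar) - ε := hMD
          _ = dist pstar.1 pstar.2 - ε := by rw [MD, hpeq]
      by_contra hle
      push_neg at hle
      rcases eq_or_lt_of_le hle with heq | hlt
      · have := hspread q pstar (coPairs_isPair hq) (coPairs_isPair hpstar) heq.symm
        linarith
      · have : dist pstar.1 pstar.2 < dist q.1 q.2 := by
          by_contra h'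
          push_neg at h'
          exact absurd (hmono q pstar (coPairs_isPair hq) (coPairs_isPair hpstar) h')
            (not_le.mpr hlt)
        linarith
    have h1 : lamMinus X w Θ (hSco Θ hΘ) < w pstar :=
      (Finset.sup'_lt_iff (hSco Θ hΘ)).mpr hub
    exact h1.trans_le (Finset.le_sup' w hpstar)
  -- lamPlus Θstar ≤ lamPlus Θ
  have hlp : lamPlus X w Θstar (hSsep Θstar hstar) ≤ lamPlus X w Θ (hSsep Θ hΘ) := by
    apply Finset.le_inf'
    intro q hq
    have hdq : MS X Θ (hSsep Θ hΘ) ≤ dist q.1 q.2 :=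
      Finset.inf'_le (fun p : α × α => dist p.1 p.2) hq
    have : dist qstar.1 qstar.2 ≤ dist q.1 q.2 := by
      calc dist qstar.1 qstar.2 = MS X Θstar (hSsep Θstar hstar) := by rw [MS, hqeq]
        _ ≤ MS X Θ (hSsep Θ hΘ) := hMS
        _ ≤ dist q.1 q.2 := hdq
    exact le_trans (Finset.inf'_le w hqstar)
      (hmono qstar q (sepPairs_isPair hqstar) (sepPairs_isPair hq) this)
  exact hpareto ⟨Θ, hΘ, le_of_lt hlm, hlp, Or.inl hlm⟩
end

section
/- Let n, k ≥ 1 and let Θ : Fin n → Fin k be surjective and satisfy the first-fit property. If Γ is a permutation of Fin k such that Γ ∘ Θ also satisfies the first-fit property, then Γ ∘ Θ = Θ (equivalently, Γ is the identity permutation). (No two feasible solutions of the tie-breaking encoding are relabellings of each other.) -/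
/-- A clustering `Θ : Fin n → Fin k` satisfies the first-fit (tie-breaking)
property if each point's label value is at most the number of distinct labels
used by earlier points (so each point uses an already-used label or the first
unused one). -/
def FirstFit {n k : ℕ} (Θ : Fin n → Fin k) : Prop :=
  ∀ i : Fin n,
    (Θ i : ℕ) ≤ ((Finset.univ.filter fun j : Fin n => j < i).image Θ).card

/-- The labels used by the first `m` points. -/
def ffSet {n k : ℕ} (Θ : Fin n → Fin k) (m : ℕ) : Finset (Fin k) :=
  (Finset.univ.filter fun j : Fin n => (j : ℕ) < m).image Θ

lemma ffSet_eq {n k : ℕ} (Θ : Fin n → Fin k) (i : Fin n) :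
    (Finset.univ.filter fun j : Fin n => j < i).image Θ = ffSet Θ (i : ℕ) := by
  rfl

lemma ffSet_mem_lt {n k : ℕ} (Θ : Fin n → Fin k) (hff : FirstFit Θ) :
    ∀ m, ∀ x ∈ ffSet Θ m, (x : ℕ) < (ffSet Θ m).card := by
  intro m
  induction m with
  | zero => simp [ffSet]
  | succ m ih =>
    by_cases hmn : m < n
    · have hstep : ffSet Θ (m + 1) = insert (Θ ⟨m, hmn⟩) (ffSet Θ m) := by
        unfold ffSet
        rw [← Finset.image_insert]
        congr 1
        ext j
        simp only [Finset.mem_insert, Finset.mem_filter, Finset.mem_univ, true_and]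
        constructor
        · intro hj
          rcases Nat.lt_succ_iff_lt_or_eq.mp hj with h | h
          · exact Or.inr h
          · exact Or.inl (Fin.ext h)
        · rintro (rfl | h)
          · exact Nat.lt_succ_self m
          · exact Nat.lt_succ_of_lt h
      by_cases hmem : Θ ⟨m, hmn⟩ ∈ ffSet Θ m
      · rw [hstep, Finset.insert_eq_self.mpr hmem]
        exact ih
      · have hcard : (ffSet Θ (m + 1)).card = (ffSet Θ m).card + 1 := by
          rw [hstep, Finset.card_insert_of_notMem hmem]
        have hval : (Θ ⟨m, hmn⟩ : ℕ) ≤ (ffSet Θ m).card := by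
          have := hff ⟨m, hmn⟩
          rwa [ffSet_eq] at this
        intro x hx
        rw [hstep, Finset.mem_insert] at hx
        rw [hcard]
        rcases hx with rfl | hx
        · exact Nat.lt_succ_of_le hval
        · exact Nat.lt_succ_of_lt (ih x hx)
    · have : ffSet Θ (m + 1) = ffSet Θ m := by
        unfold ffSet
        congr 1
        ext j
        simp only [Finset.mem_filter, Finset.mem_univ, true_and]
        have hj : (j : ℕ) < n := j.isLt
        omega
      rw [this]; exact ih

/-- A first-fit set of used labels is an initial segment. -/
lemma ffSet_initseg {n k : ℕ} (Θ : Fin n → Fin k) (hff : FirstFit Θ) (m : ℕ) :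
    ffSet Θ m = Finset.univ.filter fun x : Fin k => (x : ℕ) < (ffSet Θ m).card := by
  have hsub : ffSet Θ m ⊆ Finset.univ.filter fun x : Fin k => (x : ℕ) < (ffSet Θ m).card := by
    intro x hx
    simp only [Finset.mem_filter, Finset.mem_univ, true_and]
    exact ffSet_mem_lt Θ hff m x hx
  have hck : (ffSet Θ m).card ≤ k := le_trans (Finset.card_le_univ _) (by simp)
  refine Finset.eq_of_subset_of_card_le hsub ?_
  rcases lt_or_eq_of_le hck with h | h
  · have h2 : (Finset.univ.filter fun x : Fin k => (x : ℕ) < (ffSet Θ m).card)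
        = Finset.Iio ⟨_, h⟩ := by
      ext x; simp [Fin.lt_def]
    rw [h2, Fin.card_Iio]
  · have h2 : (Finset.univ.filter fun x : Fin k => (x : ℕ) < (ffSet Θ m).card)
        = Finset.univ := by
      ext x
      simp only [Finset.mem_filter, Finset.mem_univ, true_and, iff_true]
      have := x.isLt
      omega
    rw [h2, Finset.card_univ, Fintype.card_fin]
    omega

/-- No two feasible solutions of the tie-breaking encoding are relabellings of
each other: if a surjective first-fit clustering relabelled by a permutation is
again first-fit, the relabelling is trivial. -/
theorem firstFit_relabelling_unique {n k : ℕ} (hn : 1 ≤ n) (hk : 1 ≤ k)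
    (Θ : Fin n → Fin k) (hsurj : Function.Surjective Θ) (hff : FirstFit Θ)
    (Γ : Equiv.Perm (Fin k)) (hff' : FirstFit (Γ ∘ Θ)) :
    Γ ∘ Θ = Θ := by
  have main : ∀ m : ℕ, ∀ i : Fin n, (i : ℕ) = m → Γ (Θ i) = Θ i := by
    intro m
    induction m using Nat.strong_induction_on with
    | _ m ih =>
      intro i him
      have hfix : ∀ x ∈ ffSet Θ (i : ℕ), Γ x = x := by
        intro x hx
        simp only [ffSet, Finset.mem_image, Finset.mem_filter, Finset.mem_univ,
          true_and] at hx
        obtain ⟨j, hj, rfl⟩ := hx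
        exact ih (j : ℕ) (him ▸ hj) j rfl
      have himg : (Finset.univ.filter fun j : Fin n => j < i).image (Γ ∘ Θ)
          = ffSet Θ (i : ℕ) := by
        rw [← Finset.image_image, ffSet_eq]
        rw [Finset.image_congr (fun x hx => hfix x hx)]
        simp
      by_cases hmem : Θ i ∈ ffSet Θ (i : ℕ)
      · exact hfix _ hmem
      · have hval : (Θ i : ℕ) ≤ (ffSet Θ (i : ℕ)).card := by
          have := hff i; rwa [ffSet_eq] at this
        have hΓmem : Γ (Θ i) ∉ ffSet Θ (i : ℕ) := by
          intro h
          have h1 : Γ (Γ (Θ i)) = Γ (Θ i) := hfix _ h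
          exact hmem (Γ.injective h1 ▸ h)
        have hΓval : (Γ (Θ i) : ℕ) ≤ (ffSet Θ (i : ℕ)).card := by
          have := hff' i
          rwa [himg] at this
        have hseg := ffSet_initseg Θ hff (i : ℕ)
        have h1 : ¬ ((Θ i : ℕ) < (ffSet Θ (i : ℕ)).card) := by
          intro h
          apply hmem
          rw [hseg]
          simp only [Finset.mem_filter, Finset.mem_univ, true_and]
          convert h using 2 <;> rw [← hseg]
        have h2 : ¬ ((Γ (Θ i) : ℕ) < (ffSet Θ (i : ℕ)).card) := by
          intro h
          apply hΓmem
          rw [hseg]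
          simp only [Finset.mem_filter, Finset.mem_univ, true_and]
          convert h using 2 <;> rw [← hseg]
        have : (Γ (Θ i) : ℕ) = (Θ i : ℕ) := by omega
        exact Fin.ext this
  funext i
  exact main (i : ℕ) i rfl
end
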